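/- arXiv:1107.4699 — 6 statements merged into one kernel-verified Lean document; each statement's English description precedes it below -/
import Mathlib

section
/- If a binomial ideal I in a commutative monoid algebra k[Q] induces the trivial congruence (every class a singleton), then either I = 0 or I is generated by a single monomial t^∞ where ∞ is a nil element of Q. -/
variable {k : Type*} [Field k] {Q : Type*} [AddCommMonoid Q]

/-- The monomial `t^q` in the monoid algebra `k[Q]`. -/
noncomputable def mono (k : Type*) [Field k] {Q : Type*} [AddCommMonoid Q] (q : Q) :
    AddMonoidAlgebra k Q := AddMonoidAlgebra.single q 1

/-- A binomial ideal is one generated by binomials `t^p - λ t^q`, `λ ∈ k`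
possibly `0`. -/
def IsBinomialIdeal (I : Ideal (AddMonoidAlgebra k Q)) : Prop :=
  ∃ S : Set (AddMonoidAlgebra k Q), I = Ideal.span S ∧
    ∀ f ∈ S, ∃ (p q : Q) (lam : k), f = mono k p - lam • mono k q

/-- The congruence induced by `I`: `p ∼ q` iff `t^p - λ t^q ∈ I` for a unit
`λ ∈ k*`. -/
def indCong (I : Ideal (AddMonoidAlgebra k Q)) (p q : Q) : Prop :=
  ∃ lam : k, lam ≠ 0 ∧ mono k p - lam • mono k q ∈ I

/-! Under the trivial congruence a binomial `t^p - λ t^q` in `I` with `λ ≠ 0` has `p = q`, so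
every generator of `I` is a scalar multiple of a single monomial, and the nonzero ones are
monomials of `I` up to a unit. Any two monomials `t^p, t^q ∈ I` give `t^p - t^q ∈ I`, hence `p = q`;
applied to `t^p` and `t^(q + p) = t^q t^p` this makes the exponent of a monomial of `I` nil. -/

lemma mono_add (p q : Q) : mono k (p + q) = mono k p * mono k q := by
  simp [mono, AddMonoidAlgebra.single_mul_single]

lemma mono_mem_of_smul_mem {I : Ideal (AddMonoidAlgebra k Q)} {c : k} (hc : c ≠ 0) {r : Q}
    (h : c • mono k r ∈ I) : mono k r ∈ I :=
  (I.smul_mem_iff' (Units.mk0 c hc)).mp h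

section TrivialCongruence

variable {I : Ideal (AddMonoidAlgebra k Q)} (htriv : ∀ p q : Q, indCong I p q → p = q)
include htriv

lemma eq_of_mono_mem {p q : Q} (hp : mono k p ∈ I) (hq : mono k q ∈ I) : p = q :=
  htriv p q ⟨1, one_ne_zero, by simpa using I.sub_mem hp hq⟩

lemma add_eq_of_mono_mem {p : Q} (hp : mono k p ∈ I) (q : Q) : q + p = p :=
  eq_of_mono_mem htriv (by rw [mono_add]; exact I.mul_mem_left _ hp) hp

lemma exists_eq_smul_mono_of_binomial_mem {p q : Q} {lam : k}
    (h : mono k p - lam • mono k q ∈ I) : ∃ (c : k) (r : Q),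
      mono k p - lam • mono k q = c • mono k r ∧ (c = 0 ∨ mono k r ∈ I) := by
  have hsingle : ∃ (c : k) (r : Q), mono k p - lam • mono k q = c • mono k r := by
    by_cases hlam : lam = 0
    · exact ⟨1, p, by simp [hlam]⟩
    · obtain rfl := htriv p q ⟨lam, hlam, h⟩
      exact ⟨1 - lam, p, by rw [sub_smul, one_smul]⟩
  obtain ⟨c, r, hcr⟩ := hsingle
  exact ⟨c, r, hcr, or_iff_not_imp_left.mpr fun hc => mono_mem_of_smul_mem hc (hcr ▸ h)⟩

end TrivialCongruence

/-- A binomial ideal inducing the trivial congruence is zero or generated by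
the single monomial at a nil element of `Q`. -/
theorem binomial_ideal_trivial_congruence (I : Ideal (AddMonoidAlgebra k Q))
    (hbin : IsBinomialIdeal I)
    (htriv : ∀ p q : Q, indCong I p q → p = q) :
    I = ⊥ ∨ ∃ nil : Q, (∀ q : Q, q + nil = nil) ∧ I = Ideal.span {mono k nil} := by
  obtain ⟨S, rfl, hS⟩ := hbin
  have hgen : ∀ f ∈ S, ∃ (c : k) (r : Q), f = c • mono k r ∧
      (c = 0 ∨ mono k r ∈ Ideal.span S) := by
    intro f hf
    obtain ⟨p, q, lam, rfl⟩ := hS f hf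
    exact exists_eq_smul_mono_of_binomial_mem htriv (Ideal.subset_span hf)
  by_cases hmono : ∃ p : Q, mono k p ∈ Ideal.span S
  · obtain ⟨nil, hnil⟩ := hmono
    refine Or.inr ⟨nil, add_eq_of_mono_mem htriv hnil, le_antisymm ?_ ?_⟩
    · refine Ideal.span_le.mpr fun f hf => ?_
      obtain ⟨c, r, rfl, hc | hr⟩ := hgen f hf
      · simp [hc]
      · rw [eq_of_mono_mem htriv hr hnil]
        exact Submodule.smul_of_tower_mem _ c (Ideal.subset_span rfl)
    · exact (Ideal.span_singleton_le_iff_mem _).mpr hnil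
  · refine Or.inl (Ideal.span_eq_bot.mpr fun f hf => ?_)
    obtain ⟨c, r, rfl, hc | hr⟩ := hgen f hf
    · simp [hc]
    · exact absurd ⟨r, hr⟩ hmono
end

section
/- Let Q be a commutative monoid all of whose elements are either cancellative or nilpotent, and let F ⊆ Q be the submonoid of non-nilpotent (hence cancellative) elements. Then the quotient monoid Q/F, defined by p ∼ q iff p + f = q + g for some f, g ∈ F, is a nilmonoid partially ordered by divisibility; moreover, if Q is finitely generated then Q/F is finite. -/
/-! Lemma: if every element of a commutative monoid `Q` is cancellative or
nilpotent, and `F ⊆ Q` is the submonoid of non-nilpotent elements (so in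
particular `0 ∈ F`, i.e. `0` is not nilpotent), then `Q/F` — the quotient by
the congruence `p ∼ q ↔ p + f = q + g` for some `f, g ∈ F` — is a nilmonoid
partially ordered by divisibility, and it is finite when `Q` is finitely
generated. -/

variable {Q : Type*} [AddCommMonoid Q]

/-- An element is nil if it is absorbing. -/
def IsNilElem (x : Q) : Prop := ∀ q : Q, q + x = x

/-- An element is nilpotent if some positive multiple of it is nil. -/
def IsNilpotentElem (x : Q) : Prop := ∃ n : ℕ, 0 < n ∧ IsNilElem (n • x)

/-- An element is cancellative if addition by it is injective. -/
def IsCancellativeElem (x : Q) : Prop := ∀ a b : Q, x + a = x + b → a = b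

/-- The congruence defining `Q/F`, where `F` is the set of non-nilpotent
elements: `p ∼ q` iff `p + f = q + g` for some `f, g ∈ F`. -/
def modFRel (p q : Q) : Prop :=
  ∃ f g : Q, ¬ IsNilpotentElem f ∧ ¬ IsNilpotentElem g ∧ p + f = q + g

/-! Non-nilpotent elements are cancellative, hence closed under addition: they form a submonoid
`F` and `∼` is a congruence. Every non-nilpotent `q` satisfies `q ∼ 0`, and the image of a
nilpotent element stays nilpotent, so `Q/F` is a nilmonoid. In a nilmonoid, `p + a = q` and
`q + b = p` force `p = q`: otherwise `a + b` is nilpotent and fixes `p`, so `p` is a nil multiple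
of `a + b` and absorbs `a`. Finally, the multiples of a nilpotent element stabilise at its nil
multiple, and a finitely generated commutative monoid whose elements all have finitely many
multiples is finite. -/

def IsNilmonoid (M : Type*) [AddCommMonoid M] : Prop := ∀ x : M, x = 0 ∨ IsNilpotentElem x

theorem IsNilpotentElem.add_right {x : Q} (hx : IsNilpotentElem x) (y : Q) :
    IsNilpotentElem (x + y) := by
  obtain ⟨n, hn, hnil⟩ := hx
  refine ⟨n, hn, fun q => ?_⟩
  calc q + n • (x + y) = (q + n • y) + n • x := by rw [smul_add]; abel
    _ = n • y + n • x := by rw [hnil, hnil]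
    _ = n • (x + y) := by rw [smul_add, add_comm]

theorem IsNilpotentElem.map {N : Type*} [AddCommMonoid N] {f : Q →+ N}
    (hf : Function.Surjective f) {x : Q} (hx : IsNilpotentElem x) : IsNilpotentElem (f x) := by
  obtain ⟨n, hn, hnil⟩ := hx
  refine ⟨n, hn, fun y => ?_⟩
  obtain ⟨z, rfl⟩ := hf y
  rw [← map_nsmul, ← map_add, hnil z]

theorem IsNilElem.of_add_eq_self {p c : Q} (hc : IsNilpotentElem c) (hp : p + c = p) :
    IsNilElem p := by
  obtain ⟨n, -, hnil⟩ := hc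
  have hpn : p + n • c = p := by
    have := Function.IsFixedPt.iterate (f := (· + c)) hp n
    rwa [add_right_iterate] at this
  rwa [show p = n • c from hpn.symm.trans (hnil p)]

theorem IsNilpotentElem.finite_multiples {x : Q} (hx : IsNilpotentElem x) :
    (AddSubmonoid.multiples x : Set Q).Finite := by
  obtain ⟨n, -, hnil⟩ := hx
  refine ((Set.finite_Iic n).image (· • x)).subset ?_
  rintro _ ⟨k, rfl⟩
  rcases le_total k n with hk | hk
  · exact ⟨k, hk, rfl⟩
  · refine ⟨n, Set.mem_Iic.mpr le_rfl, ?_⟩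
    show n • x = k • x
    rw [← Nat.sub_add_cancel hk, add_nsmul, hnil]

theorem IsNilmonoid.eq_of_add_eq_of_add_eq (hQ : IsNilmonoid Q) {p q a b : Q}
    (hpq : p + a = q) (hqp : q + b = p) : p = q := by
  rcases hQ a with rfl | ha
  · simpa using hpq
  have hp : IsNilElem p := .of_add_eq_self (ha.add_right b) (by rw [← add_assoc, hpq, hqp])
  rw [← hpq, add_comm, hp]

theorem AddMonoid.finite_of_fg_of_finite_multiples [AddMonoid.FG Q]
    (hQ : ∀ x : Q, (AddSubmonoid.multiples x : Set Q).Finite) : Finite Q := by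
  obtain ⟨S, hS⟩ := AddMonoid.FG.fg_top (M := Q)
  have hsums : Set.univ ⊆ (fun v : S → Q => ∑ i, v i) ''
      {v | ∀ i : S, v i ∈ AddSubmonoid.multiples (i : Q)} := by
    intro x _
    obtain ⟨a, rfl⟩ := AddSubmonoid.mem_closure_finset'.mp (hS ▸ AddSubmonoid.mem_top x)
    exact ⟨fun i : S => a i • (i : Q), fun i => ⟨a i, rfl⟩, rfl⟩
  exact Set.finite_univ_iff.mp (((Set.Finite.pi' fun i : S => hQ i).image _).subset hsums)

theorem IsNilmonoid.finite [AddMonoid.FG Q] (hQ : IsNilmonoid Q) : Finite Q :=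
  AddMonoid.finite_of_fg_of_finite_multiples fun x =>
    (hQ x).elim (fun hx => by simp [hx]) IsNilpotentElem.finite_multiples

theorem not_isNilpotentElem_add (h : ∀ q : Q, IsCancellativeElem q ∨ IsNilpotentElem q)
    {x y : Q} (hx : ¬ IsNilpotentElem x) (hy : ¬ IsNilpotentElem y) :
    ¬ IsNilpotentElem (x + y) := by
  rintro ⟨n, hn, hnil⟩
  have hcanc : IsAddLeftRegular (n • x) :=
    IsAddLeftRegular.nsmul n ((h x).resolve_right hx : IsAddLeftRegular x)
  refine hy ⟨n, hn, fun q => hcanc ?_⟩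
  calc n • x + (q + n • y) = q + n • (x + y) := by rw [smul_add]; abel
    _ = n • x + n • y := by rw [hnil, smul_add]

def nonNilpotents (h : ∀ q : Q, IsCancellativeElem q ∨ IsNilpotentElem q)
    (h0 : ¬ IsNilpotentElem (0 : Q)) : AddSubmonoid Q where
  carrier := {x | ¬ IsNilpotentElem x}
  zero_mem' := h0
  add_mem' := not_isNilpotentElem_add h

def modFCon (h : ∀ q : Q, IsCancellativeElem q ∨ IsNilpotentElem q)
    (h0 : ¬ IsNilpotentElem (0 : Q)) : AddCon Q where
  r := modFRel
  iseqv.refl _ := ⟨0, 0, h0, h0, rfl⟩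
  iseqv.symm := fun ⟨f, g, hf, hg, e⟩ => ⟨g, f, hg, hf, e.symm⟩
  iseqv.trans := fun ⟨f, g, hf, hg, e⟩ ⟨f', g', hf', hg', e'⟩ =>
    ⟨f + f', g' + g, (nonNilpotents h h0).add_mem hf hf', (nonNilpotents h h0).add_mem hg' hg, by
      rw [← add_assoc, e, add_right_comm, e', add_assoc]⟩
  add' := fun ⟨f, g, hf, hg, e⟩ ⟨f', g', hf', hg', e'⟩ =>
    ⟨f + f', g + g', (nonNilpotents h h0).add_mem hf hf', (nonNilpotents h h0).add_mem hg hg', by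
      rw [add_add_add_comm, e, e', add_add_add_comm]⟩

theorem modFRel_zero_of_not_isNilpotentElem (h0 : ¬ IsNilpotentElem (0 : Q)) {x : Q}
    (hx : ¬ IsNilpotentElem x) : modFRel x 0 :=
  ⟨0, x, h0, hx, by rw [add_zero, zero_add]⟩

theorem isNilmonoid_modFCon_quotient (h : ∀ q : Q, IsCancellativeElem q ∨ IsNilpotentElem q)
    (h0 : ¬ IsNilpotentElem (0 : Q)) : IsNilmonoid (modFCon h h0).Quotient := by
  intro x
  induction x using AddCon.induction_on with | _ x
  by_cases hx : IsNilpotentElem x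
  · exact .inr (hx.map (modFCon h h0).mk'_surjective)
  · exact .inl ((modFCon h h0).eq.mpr (modFRel_zero_of_not_isNilpotentElem h0 hx))

/-- If every element of `Q` is cancellative or nilpotent then the quotient
`Q/F` by the non-nilpotent (hence cancellative) submonoid `F` is:
(1) a nilmonoid — every class distinct from the class of the identity is
nilpotent, i.e. some positive multiple of it is absorbing modulo `∼`;
(2) partially ordered by divisibility — Green's preorder on `Q/F` is
antisymmetric; and
(3) finite, provided `Q` is finitely generated. -/
theorem quotient_mod_cancellative_submonoid
    (h : ∀ q : Q, IsCancellativeElem q ∨ IsNilpotentElem q)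
    (h0 : ¬ IsNilpotentElem (0 : Q)) :
    (∀ q : Q, ¬ modFRel q 0 →
        ∃ n : ℕ, 0 < n ∧ ∀ p : Q, modFRel (p + n • q) (n • q)) ∧
    (∀ p q : Q, (∃ a : Q, modFRel (p + a) q) → (∃ b : Q, modFRel (q + b) p) →
        modFRel p q) ∧
    (AddMonoid.FG Q → Finite (Quot (modFRel (Q := Q)))) := by
  set c := modFCon h h0
  have hc : IsNilmonoid c.Quotient := isNilmonoid_modFCon_quotient h h0
  refine ⟨fun q hq => ?_, fun p q ⟨a, ha⟩ ⟨b, hb⟩ => ?_, fun _ => ?_⟩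
  · obtain ⟨n, hn, hnil⟩ := not_not.mp (mt (modFRel_zero_of_not_isNilpotentElem h0) hq)
    exact ⟨n, hn, fun p => by rw [hnil p]; exact c.refl _⟩
  · exact c.eq.mp (hc.eq_of_add_eq_of_add_eq (a := a) (b := b) (c.eq.mpr ha) (c.eq.mpr hb))
  · have : AddMonoid.FG c.Quotient := AddMonoid.fg_of_surjective c.mk' c.mk'_surjective
    exact hc.finite
end

section
/- Localization of a commutative monoid at a prime ideal commutes with finite common refinements of congruences: if a congruence ∼ on Q is the common refinement of congruences ∼₁, …, ∼ᵣ, and P ⊂ Q is a prime ideal, then the congruence induced by ∼ on the localization Q_P is the common refinement of the congruences induced by the ∼ⱼ on Q_P. -/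
/-! Localization at a monoid prime commutes with finite common refinements of
congruences.  The localization `Q_P` consists of formal differences `q - u`
with `u ∉ P`; a congruence `∼` on `Q` induces the congruence
`(q - u) ∼ (q' - u') ↔ ∃ w ∉ P, w + u' + q ∼ w + u + q'` on `Q_P`.
We state the result on representatives. -/

variable {Q : Type*} [AddCommMonoid Q]

/-- An ideal of a monoid. -/
def IsMonIdeal (T : Set Q) : Prop := ∀ t ∈ T, ∀ q : Q, t + q ∈ T

/-- A prime ideal of a monoid. -/
def IsMonPrime (P : Set Q) : Prop :=
  IsMonIdeal P ∧ ∀ t s : Q, t + s ∈ P → t ∈ P ∨ s ∈ P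

/-! Given witnesses `w j ∉ P` for each `∼ⱼ`, their sum is again outside `P`
(the complement of a proper prime is a submonoid), and it is a witness for every
`∼ⱼ` at once, because a congruence is preserved by adding `∑_{i ≠ j} w i`. -/

def IsMonPrime.primeCompl {P : Set Q} (hP : IsMonPrime P) (h0 : (0 : Q) ∉ P) :
    AddSubmonoid Q where
  carrier := Pᶜ
  zero_mem' := h0
  add_mem' ha hb hab := (hP.2 _ _ hab).elim ha hb

theorem AddCon.exists_rel_iInf_iff {ι : Type*} [Fintype ι] (S : AddSubmonoid Q)
    (c : ι → AddCon Q) (x y : Q) :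
    (∃ w ∈ S, (⨅ i, c i) (w + x) (w + y)) ↔ ∀ i, ∃ w ∈ S, c i (w + x) (w + y) := by
  classical
  simp only [AddCon.coe_iInf, iInf_apply, iInf_Prop_eq]
  refine ⟨fun ⟨w, hw, hc⟩ i => ⟨w, hw, hc i⟩, fun h => ?_⟩
  choose w hw hc using h
  refine ⟨∑ i, w i, S.sum_mem fun i _ => hw i, fun i => ?_⟩
  rw [← Finset.sum_erase_add _ _ (Finset.mem_univ i), add_assoc, add_assoc]
  exact (c i).add ((c i).refl _) (hc i)

theorem localization_commutes_common_refinement_general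
    (P : Set Q) (hP : IsMonPrime P) (h0 : (0 : Q) ∉ P)
    (r : ℕ) (c : Fin r → AddCon Q) (d : AddCon Q)
    (hd : ∀ x y : Q, d x y ↔ ∀ j, c j x y)
    (q q' u u' : Q) :
    (∃ w : Q, w ∉ P ∧ d (w + u' + q) (w + u + q')) ↔
      ∀ j, ∃ w : Q, w ∉ P ∧ (c j) (w + u' + q) (w + u + q') := by
  have hd_iInf : d = ⨅ j, c j := AddCon.ext fun x y => by
    simp only [hd, AddCon.coe_iInf, iInf_apply, iInf_Prop_eq]
  simp only [add_assoc]
  exact hd_iInf ▸ AddCon.exists_rel_iInf_iff (hP.primeCompl h0) c (u' + q) (u + q')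

/-- If `∼` is the common refinement of congruences `∼₁, …, ∼ᵣ` on `Q` and
`P ⊂ Q` is a (proper) prime ideal, then the congruence induced by `∼` on the
localization `Q_P` is the common refinement of the congruences induced by the
`∼ⱼ` on `Q_P`. -/
theorem localization_commutes_common_refinement
    (P : Set Q) (hP : IsMonPrime P) (h0 : (0 : Q) ∉ P)
    (r : ℕ) (c : Fin r → AddCon Q) (d : AddCon Q)
    (hd : ∀ x y : Q, d x y ↔ ∀ j, c j x y)
    (q q' u u' : Q) (hu : u ∉ P) (hu' : u' ∉ P) :
    (∃ w : Q, w ∉ P ∧ d (w + u' + q) (w + u + q')) ↔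
      ∀ j, ∃ w : Q, w ∉ P ∧ (c j) (w + u' + q) (w + u + q') :=
  localization_commutes_common_refinement_general P hP h0 r c d hd q q' u u'
end

section
/- Every infinite subset of a partially ordered noetherian commutative monoid contains an infinite strictly ascending chain. -/
/-! Bad sequences for divisibility would generate a strictly increasing chain of ideals, so
noetherianity makes divisibility a well-quasi-order. An injective sequence in `W` then has a
divisibility-monotone subsequence, whose consecutive terms are distinct. -/

variable {Q : Type*} [AddCommMonoid Q]

def AddDivides (p q : Q) : Prop := ∃ a : Q, p + a = q

instance : IsPreorder Q AddDivides where
  refl p := ⟨0, add_zero p⟩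
  trans := by
    rintro p _ _ ⟨a, rfl⟩ ⟨b, rfl⟩
    exact ⟨a + b, (add_assoc _ _ _).symm⟩

theorem isMonIdeal_setOf_addDivides (S : Set Q) : IsMonIdeal {q | ∃ s ∈ S, AddDivides s q} := by
  rintro _ ⟨s, hs, a, rfl⟩ q
  exact ⟨s, hs, a + q, (add_assoc _ _ _).symm⟩

theorem wellQuasiOrdered_addDivides
    (hnoeth : ¬ ∃ T : ℕ → Set Q, (∀ n, IsMonIdeal (T n)) ∧ ∀ n, T n ⊂ T (n + 1)) :
    WellQuasiOrdered (AddDivides (Q := Q)) := by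
  intro f
  by_contra! hbad
  refine hnoeth ⟨fun n => {q | ∃ s ∈ f '' Set.Iio n, AddDivides s q},
    fun n => isMonIdeal_setOf_addDivides _, fun n => ⟨?_, fun hsub => ?_⟩⟩
  · exact fun q ⟨s, hs, hsq⟩ => ⟨s, Set.image_mono (Set.Iio_subset_Iio n.le_succ) hs, hsq⟩
  · -- `f n` lies in the ideal generated by `f 0, …, f n`, but not in the one generated by its
    -- predecessors, since no `f i` with `i < n` divides it.
    obtain ⟨_, ⟨i, hi, rfl⟩, hdiv⟩ := hsub ⟨f n, ⟨n, Set.mem_Iio.2 n.lt_succ_self, rfl⟩, refl _⟩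
    exact hbad i n hi hdiv

theorem Set.Infinite.exists_injective_chain {α : Type*} {r : α → α → Prop} [IsPreorder α r]
    (hr : WellQuasiOrdered r) {W : Set α} (hW : W.Infinite) :
    ∃ w : ℕ → α, Function.Injective w ∧ (∀ n, w n ∈ W) ∧ ∀ n, r (w n) (w (n + 1)) := by
  let e : ℕ ↪ α := (hW.natEmbedding W).trans (Function.Embedding.subtype _)
  obtain ⟨g, hg⟩ := hr.exists_monotone_subseq e
  exact ⟨fun n => e (g n), e.injective.comp g.injective,
    fun n => (hW.natEmbedding W (g n)).2, fun n => hg n (n + 1) n.le_succ⟩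

theorem infinite_subset_has_ascending_chain_general
    (hnoeth : ¬ ∃ T : ℕ → Set Q, (∀ n, IsMonIdeal (T n)) ∧ ∀ n, T n ⊂ T (n + 1))
    (W : Set Q) (hW : W.Infinite) :
    ∃ w : ℕ → Q, (∀ n, w n ∈ W) ∧
      ∀ n, (∃ a : Q, w n + a = w (n + 1)) ∧ w n ≠ w (n + 1) := by
  obtain ⟨w, hinj, hwW, hchain⟩ := hW.exists_injective_chain (wellQuasiOrdered_addDivides hnoeth)
  exact ⟨w, hwW, fun n => ⟨hchain n, hinj.ne n.succ_ne_self.symm⟩⟩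

/-- Every infinite subset `W` of a noetherian (no infinite strictly increasing
chain of monoid ideals) commutative monoid that is partially ordered by
divisibility (Green's preorder is antisymmetric) contains an infinite strictly
ascending chain `w₀ ≺ w₁ ≺ ⋯`. -/
theorem infinite_subset_has_ascending_chain
    (hnoeth : ¬ ∃ T : ℕ → Set Q, (∀ n, IsMonIdeal (T n)) ∧ ∀ n, T n ⊂ T (n + 1))
    (hpo : ∀ p q : Q, (∃ a : Q, p + a = q) → (∃ b : Q, q + b = p) → p = q)
    (W : Set Q) (hW : W.Infinite) :
    ∃ w : ℕ → Q, (∀ n, w n ∈ W) ∧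
      ∀ n, (∃ a : Q, w n + a = w (n + 1)) ∧ w n ≠ w (n + 1) :=
  infinite_subset_has_ascending_chain_general hnoeth W hW
end

section
/- If Q is a finitely generated commutative monoid with a finite kernel K (a finite ideal contained in every nonempty ideal), then the unital augmentation ideal I₁ = ⟨t^q − 1 : q ∈ Q⟩ of the monoid algebra k[Q] is an associated prime of k[Q]: it equals the annihilator of the element f = Σ_{k∈K} t^k. -/
/-! Each translation `x ↦ q + x` maps the kernel `K` into itself, and onto itself because
`q + K` is again a nonempty ideal; as `K` is finite it permutes `K`, so `t^q f = f` and `I₁`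
kills `f`. But `I₁` is the kernel of the augmentation `k[Q] → k`, hence maximal, so it equals
the annihilator of `f`, a proper ideal as `f ≠ 0`. -/

variable {k : Type*} [Field k] {Q : Type*} [AddCommMonoid Q]

/-- The unital augmentation ideal `⟨t^q − 1 : q ∈ Q⟩`. -/
noncomputable def augIdeal (k : Type*) [Field k] (Q : Type*) [AddCommMonoid Q] :
    Ideal (AddMonoidAlgebra k Q) :=
  Ideal.span {g : AddMonoidAlgebra k Q | ∃ q : Q, g = mono k q - 1}

def IsAddMonoidIdeal (T : Set Q) : Prop := ∀ t ∈ T, ∀ q : Q, t + q ∈ T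

theorem IsAddMonoidIdeal.image_add_left {T : Set Q} (hT : IsAddMonoidIdeal T) (q : Q) :
    IsAddMonoidIdeal ((q + ·) '' T) := by
  rintro _ ⟨t, ht, rfl⟩ r
  exact ⟨t + r, hT t ht r, (add_assoc q t r).symm⟩

theorem bijOn_add_left_of_finite_kernel {K : Set Q} (hfin : K.Finite) (hne : K.Nonempty)
    (hK : IsAddMonoidIdeal K) (hmin : ∀ T : Set Q, IsAddMonoidIdeal T → T.Nonempty → K ⊆ T)
    (q : Q) : Set.BijOn (q + ·) K K := by
  have hmaps : Set.MapsTo (q + ·) K K := fun x hx => by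
    simpa only [add_comm x q] using hK x hx q
  exact (hfin.surjOn_iff_bijOn_of_mapsTo hmaps).mp <|
    hmin _ (hK.image_add_left q) (hne.image _)

noncomputable def augmentation (k : Type*) [Field k] (Q : Type*) [AddCommMonoid Q] :
    AddMonoidAlgebra k Q →ₐ[k] k :=
  AddMonoidAlgebra.lift k k Q 1

theorem augmentation_mono (q : Q) : augmentation k Q (mono k q) = 1 := by
  simp [augmentation, mono, AddMonoidAlgebra.lift_single]

theorem sub_augmentation_mem_augIdeal (g : AddMonoidAlgebra k Q) :
    g - algebraMap k _ (augmentation k Q g) ∈ augIdeal k Q := by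
  induction g using AddMonoidAlgebra.induction_on with
  | of q =>
    have hq : AddMonoidAlgebra.of k Q (Multiplicative.ofAdd q) = mono k q := rfl
    rw [hq, augmentation_mono, map_one]
    exact Ideal.subset_span ⟨q, rfl⟩
  | add a b ha hb =>
    convert Ideal.add_mem _ ha hb using 1
    rw [map_add, map_add]; ring
  | smul r a ha =>
    convert Ideal.mul_mem_left _ (algebraMap k _ r) ha using 1
    rw [map_smul, smul_eq_mul, map_mul, Algebra.smul_def]; ring

theorem augIdeal_eq_ker : augIdeal k Q = RingHom.ker (augmentation k Q) := by
  refine le_antisymm (Ideal.span_le.mpr ?_) fun g hg => ?_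
  · rintro _ ⟨q, rfl⟩
    simp [augmentation_mono]
  · simpa [(RingHom.mem_ker).mp hg] using sub_augmentation_mem_augIdeal g

theorem augIdeal_isMaximal : (augIdeal k Q).IsMaximal :=
  augIdeal_eq_ker (k := k) (Q := Q) ▸ RingHom.ker_isMaximal_of_surjective _
    fun c => ⟨algebraMap k _ c, AlgHom.commutes _ c⟩

theorem sum_mono_ne_zero {K : Finset Q} (hne : K.Nonempty) : ∑ x ∈ K, mono k x ≠ 0 := by
  classical
  obtain ⟨x₀, hx₀⟩ := hne
  intro h
  have := congrArg (fun f : AddMonoidAlgebra k Q => f.coeff x₀) h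
  simp [mono, Finsupp.finsetSum_apply, Finsupp.single_apply, hx₀] at this

theorem mono_mul_sum_mono {K : Finset Q} {q : Q} (hq : Set.BijOn (q + ·) K K) :
    mono k q * ∑ x ∈ K, mono k x = ∑ x ∈ K, mono k x := by
  rw [Finset.mul_sum]
  refine Finset.sum_nbij (q + ·) hq.mapsTo hq.injOn hq.surjOn fun x _ => ?_
  simp [mono, AddMonoidAlgebra.single_mul_single]

theorem augIdeal_le_annihilator {K : Finset Q} (hK : ∀ q : Q, Set.BijOn (q + ·) K K) :
    augIdeal k Q ≤ (Ideal.span {∑ x ∈ K, mono k x}).annihilator := by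
  refine Ideal.span_le.mpr ?_
  rintro _ ⟨q, rfl⟩
  rw [SetLike.mem_coe, Submodule.mem_annihilator_span_singleton, smul_eq_mul, sub_mul,
    one_mul, mono_mul_sum_mono (hK q), sub_self]

theorem augmentation_ideal_is_annihilator_general
    (K : Finset Q) (hne : K.Nonempty)
    (hid : ∀ x ∈ K, ∀ q : Q, x + q ∈ K)
    (hker : ∀ T : Set Q, (∀ t ∈ T, ∀ q : Q, t + q ∈ T) → T.Nonempty →
      (K : Set Q) ⊆ T) :
    (∑ x ∈ K, mono k x) ≠ 0 ∧
      ∀ g : AddMonoidAlgebra k Q,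
        (g ∈ augIdeal k Q ↔ g * ∑ x ∈ K, mono k x = 0) := by
  have hf : ∑ x ∈ K, mono k x ≠ 0 := sum_mono_ne_zero hne
  have hbij : ∀ q : Q, Set.BijOn (q + ·) K K :=
    bijOn_add_left_of_finite_kernel K.finite_toSet hne.to_set hid hker
  have hproper : (Ideal.span {∑ x ∈ K, mono k x}).annihilator ≠ ⊤ := by
    rw [Ne, Submodule.annihilator_eq_top_iff, Submodule.span_singleton_eq_bot]
    exact hf
  have heq := augIdeal_isMaximal.eq_of_le hproper (augIdeal_le_annihilator hbij)
  refine ⟨hf, fun g => ?_⟩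
  rw [heq, Submodule.mem_annihilator_span_singleton, smul_eq_mul]

/-- The unital augmentation ideal is the annihilator of `f = Σ_{x ∈ K} t^x`
(and `f ≠ 0`), when `K` is a finite kernel of the finitely generated monoid
`Q`; hence it is an associated prime of `k[Q]`. -/
theorem augmentation_ideal_is_annihilator [AddMonoid.FG Q]
    (K : Finset Q) (hne : K.Nonempty)
    (hid : ∀ x ∈ K, ∀ q : Q, x + q ∈ K)
    (hker : ∀ T : Set Q, (∀ t ∈ T, ∀ q : Q, t + q ∈ T) → T.Nonempty →
      (K : Set Q) ⊆ T) :
    (∑ x ∈ K, mono k x) ≠ 0 ∧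
      ∀ g : AddMonoidAlgebra k Q,
        (g ∈ augIdeal k Q ↔ g * ∑ x ∈ K, mono k x = 0) :=
  augmentation_ideal_is_annihilator_general K hne hid hker
end

section
/- Let Q be a finitely generated commutative monoid. The universal (Grothendieck) group Q_∅ of Q is trivial if and only if Q has a nil (absorbing) element. -/
/-! If `Q_∅` is trivial then every `q` satisfies `q + c = c` for some `c`. Summing such `c`
over a finite generating set gives an element fixed by every generator, hence by all of `Q`:
a nil element. Conversely, a nil element identifies any two fractions. -/

variable {Q : Type*} [AddCommMonoid Q]

theorem AddLocalization.subsingleton_iff {S : AddSubmonoid Q} :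
    Subsingleton (AddLocalization S) ↔ ∀ q : Q, ∃ c : S, q + c = c := by
  constructor
  · intro h q
    have hq := h.elim (mk q 0) (mk 0 0)
    rw [mk_eq_mk_iff, r_iff_exists] at hq
    obtain ⟨c, hc⟩ := hq
    exact ⟨c, by simpa [add_comm] using hc⟩
  · intro h
    refine ⟨fun x y => ?_⟩
    induction x using AddLocalization.ind with | H a => ?_
    induction y using AddLocalization.ind with | H b => ?_
    obtain ⟨c, hc⟩ := h (b.2 + a.1)
    obtain ⟨d, hd⟩ := h (a.2 + b.1)
    rw [mk_eq_mk_iff, r_iff_exists]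
    refine ⟨c + d, ?_⟩
    calc ((c + d : S) : Q) + (b.2 + a.1) = d + ((b.2 + a.1) + c) := by push_cast; abel
      _ = (a.2 + b.1) + d + c := by rw [hc, hd]
      _ = ((c + d : S) : Q) + (a.2 + b.1) := by push_cast; abel

theorem AddSubmonoid.exists_closure_le_stabilizer_of_forall_exists_add_eq_self
    {G : Finset Q} (h : ∀ s ∈ G, ∃ c : Q, s + c = c) :
    ∃ z : Q, closure (G : Set Q) ≤ AddAction.stabilizerAddSubmonoid Q z := by
  classical
  choose c hc using h
  refine ⟨∑ s ∈ G.attach, c s.1 s.2, closure_le.2 fun s hs => ?_⟩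
  have hsum := Finset.add_sum_erase G.attach (fun t => c t.1 t.2) (Finset.mem_attach _ ⟨s, hs⟩)
  simp only [SetLike.mem_coe, AddAction.mem_stabilizerAddSubmonoid_iff, vadd_eq_add]
  rw [← hsum, ← add_assoc, hc]

/-- The universal group `Q_∅` of a finitely generated commutative monoid `Q`
is trivial if and only if `Q` has a nil element. -/
theorem universal_group_trivial_iff_nil [AddMonoid.FG Q] :
    Subsingleton (AddLocalization (⊤ : AddSubmonoid Q)) ↔
      ∃ nil : Q, ∀ q : Q, q + nil = nil := by
  rw [AddLocalization.subsingleton_iff]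
  constructor
  · intro h
    obtain ⟨G, hG⟩ := AddMonoid.FG.fg_top (M := Q)
    obtain ⟨z, hz⟩ := AddSubmonoid.exists_closure_le_stabilizer_of_forall_exists_add_eq_self
      (G := G) fun s _ => (h s).elim fun c hc => ⟨c, hc⟩
    exact ⟨z, fun q => hz (hG ▸ AddSubmonoid.mem_top q)⟩
  · rintro ⟨nil, hnil⟩ q
    exact ⟨⟨nil, trivial⟩, hnil q⟩
end
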